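/- arXiv:1002.3102 — 7 statements merged into one kernel-verified Lean document; each statement's English description precedes it below -/
import Mathlib

section
/- Let Y_1, ..., Y_n be independent nonnegative real-valued random variables, let u_i = Pr[Y_i ≠ 0] and w_i = E[Y_i], and suppose u_i > 0 for all i, the ratios w_1/u_1 ≥ w_2/u_2 ≥ ... ≥ w_n/u_n are nonincreasing, and Σ_{i=1}^n u_i ≤ 1. Let Y be the random variable obtained by examining Y_1, Y_2, ... in this order and returning the first nonzero value (with Y = 0 if all Y_i are zero). Then E[Y] = Σ_{i=1}^n (Π_{i'<i} (1 − u_{i'})) · w_i ≥ (1 − 1/e) · Σ_{i=1}^n w_i. -/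
/-!
`Z` is the sum over `i` of `Y i` restricted to the event `{∀ j < i, Y j = 0}`, and by
independence the `i`-th term has expectation `(∏_{j<i} (1 - u j)) * w i`.

For the bound write `w i = r i * u i` with `r i = w i / u i` nonincreasing. Abel summation
reduces it to the prefix inequalities
`(1 - 1/e) ∑_{i≤k} u i ≤ ∑_{i≤k} u i ∏_{j<i} (1 - u j) = 1 - ∏_{i≤k} (1 - u i)`,
which follow from `1 - u ≤ exp (-u)` and the concavity of `s ↦ 1 - exp (-s)` on `[0, 1]`.
-/

open Finset MeasureTheory ProbabilityTheory
open scoped Classical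

theorem Finset.sum_mul_le_sum_mul_of_antitoneOn {ι : Type*} [LinearOrder ι] (s : Finset ι)
    {r a b : ι → ℝ} (hr : AntitoneOn r s) (hr0 : ∀ i ∈ s, 0 ≤ r i)
    (hab : ∀ k ∈ s, ∑ i ∈ s with i ≤ k, a i ≤ ∑ i ∈ s with i ≤ k, b i) :
    ∑ i ∈ s, r i * a i ≤ ∑ i ∈ s, r i * b i := by
  induction s using Finset.induction_on_max generalizing r with
  | empty => simp
  | insert m s hlt ih =>
    have hm : m ∉ s := fun h => lt_irrefl m (hlt m h)
    have hprefix : ∀ k ∈ s, s.filter (· ≤ k) = (insert m s).filter (· ≤ k) := fun k hk => by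
      rw [filter_insert, if_neg (not_le.2 (hlt k hk))]
    have hall : (insert m s).filter (· ≤ m) = insert m s :=
      filter_true_of_mem fun x hx => (mem_insert.1 hx).elim le_of_eq fun h => (hlt x h).le
    -- Abel summation: peel off the constant `r m` and recurse on `r - r m`.
    have hsplit : ∀ c : ι → ℝ, ∑ i ∈ insert m s, r i * c i =
        ∑ i ∈ s, (r i - r m) * c i + r m * ∑ i ∈ insert m s, c i := fun c => by
      simp only [sum_insert hm, sub_mul, sum_sub_distrib, mul_add, mul_sum]
      ring
    rw [hsplit a, hsplit b]
    refine add_le_add (ih (fun i hi j hj hij => sub_le_sub_right (hr (mem_insert_of_mem hi)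
        (mem_insert_of_mem hj) hij) _) (fun i hi => sub_nonneg.2 ?_) fun k hk => ?_)
      (mul_le_mul_of_nonneg_left (by simpa only [hall] using hab m (mem_insert_self m s))
        (hr0 m (mem_insert_self m s)))
    · exact hr (mem_insert_of_mem hi) (mem_insert_self m s) (hlt i hi).le
    · rw [hprefix k hk]; exact hab k (mem_insert_of_mem hk)

theorem one_sub_inv_exp_mul_le_one_sub_exp_neg {s : ℝ} (h0 : 0 ≤ s) (h1 : s ≤ 1) :
    (1 - 1 / Real.exp 1) * s ≤ 1 - Real.exp (-s) := by
  -- `exp (-s) ≤ (1 - s) * exp 0 + s * exp (-1)` by convexity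
  have h := convexOn_exp.2 (Set.mem_univ (0 : ℝ)) (Set.mem_univ (-1 : ℝ))
    (sub_nonneg.2 h1) h0 (by ring)
  simp only [smul_eq_mul, mul_zero, mul_neg_one, zero_add, Real.exp_zero, mul_one] at h
  rw [one_div, ← Real.exp_neg]
  linarith

theorem prod_one_sub_le_exp_neg_sum {ι : Type*} (s : Finset ι) {u : ι → ℝ}
    (hu : ∀ i ∈ s, u i ≤ 1) : ∏ i ∈ s, (1 - u i) ≤ Real.exp (-∑ i ∈ s, u i) := by
  rw [← sum_neg_distrib, Real.exp_sum]
  exact prod_le_prod (fun i hi => sub_nonneg.2 (hu i hi)) fun i _ => Real.one_sub_le_exp_neg _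

theorem one_sub_inv_exp_mul_sum_le_sum_prod_Iio_mul {ι : Type*} [Fintype ι] [LinearOrder ι]
    [LocallyFiniteOrderBot ι] {u w : ι → ℝ} (hu : ∀ i, 0 < u i) (hw : ∀ i, 0 ≤ w i)
    (hratio : Antitone fun i => w i / u i) (hsum : ∑ i, u i ≤ 1) :
    (1 - 1 / Real.exp 1) * ∑ i, w i ≤ ∑ i, (∏ j ∈ Iio i, (1 - u j)) * w i := by
  set c := 1 - 1 / Real.exp 1
  have hu_le_one : ∀ i, u i ≤ 1 := fun i =>
    (single_le_sum (fun j _ => (hu j).le) (mem_univ i)).trans hsum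
  have hprefix : ∀ k, ∑ i with i ≤ k, c * u i ≤ ∑ i with i ≤ k, u i * ∏ j ∈ Iio i, (1 - u j) := by
    intro k
    have hIio : ∀ i ∈ univ.filter (· ≤ k), (univ.filter (· ≤ k)).filter (· < i) = Iio i := by
      intro i hi
      ext j
      simp only [mem_filter, mem_univ, true_and, mem_Iio] at hi ⊢
      exact ⟨And.right, fun hj => ⟨hj.le.trans hi, hj⟩⟩
    have hs : ∑ i with i ≤ k, u i ≤ 1 :=
      (sum_le_sum_of_subset_of_nonneg (filter_subset _ _) fun i _ _ => (hu i).le).trans hsum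
    calc ∑ i with i ≤ k, c * u i
        = c * ∑ i with i ≤ k, u i := (mul_sum ..).symm
      _ ≤ 1 - Real.exp (-∑ i with i ≤ k, u i) :=
        one_sub_inv_exp_mul_le_one_sub_exp_neg (sum_nonneg fun i _ => (hu i).le) hs
      _ ≤ 1 - ∏ i with i ≤ k, (1 - u i) :=
        sub_le_sub_left (prod_one_sub_le_exp_neg_sum _ fun i _ => hu_le_one i) 1
      _ = ∑ i with i ≤ k, u i * ∏ j ∈ Iio i, (1 - u j) := by
        rw [prod_one_sub_ordered, sub_sub_cancel]
        exact sum_congr rfl fun i hi => by rw [hIio i hi]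
  have habel := sum_mul_le_sum_mul_of_antitoneOn univ (r := fun i => w i / u i)
    (a := fun i => c * u i) (b := fun i => u i * ∏ j ∈ Iio i, (1 - u j))
    (hratio.antitoneOn _) (fun i _ => div_nonneg (hw i) (hu i).le)
    (fun k _ => by simpa only [filter_univ_mem] using hprefix k)
  have hcancel : ∀ i, w i / u i * u i = w i := fun i => div_mul_cancel₀ _ (hu i).ne'
  calc c * ∑ i, w i = ∑ i, w i / u i * (c * u i) :=
        by rw [mul_sum]; exact sum_congr rfl fun i _ => by rw [mul_left_comm, hcancel]
    _ ≤ ∑ i, w i / u i * (u i * ∏ j ∈ Iio i, (1 - u j)) := habel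
    _ = ∑ i, (∏ j ∈ Iio i, (1 - u j)) * w i :=
        sum_congr rfl fun i _ => by rw [← mul_assoc, hcancel, mul_comm]

theorem Finset.prod_ite_lt_ite_eq {ι M : Type*} [Fintype ι] [LinearOrder ι]
    [LocallyFiniteOrderBot ι] [CommMonoid M] (i : ι) (a b : ι → M) :
    ∏ j, (if j < i then a j else if j = i then b j else 1) = (∏ j ∈ Iio i, a j) * b i := by
  rw [prod_ite, filter_gt_eq_Iio, prod_ite_eq', if_pos (by simp)]

theorem first_nonzero_eq_sum_ite_forall_lt {ι M : Type*} [Fintype ι] [LinearOrder ι] [AddCommMonoid M]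
    (y : ι → M) :
    (if h : (univ.filter fun i => y i ≠ 0).Nonempty
      then y ((univ.filter fun i => y i ≠ 0).min' h) else 0) =
    ∑ i, if ∀ j < i, y j = 0 then y i else 0 := by
  split_ifs with h
  · set m := (univ.filter fun i => y i ≠ 0).min' h
    have hm : y m ≠ 0 := (mem_filter.1 (min'_mem _ h)).2
    have hbefore : ∀ j < m, y j = 0 := fun j hj => by
      by_contra hj0
      exact not_le.2 hj (min'_le _ _ (mem_filter.2 ⟨mem_univ j, hj0⟩))
    rw [sum_eq_single m, if_pos hbefore]
    · intro i _ him
      split_ifs with hi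
      · by_contra hi0
        exact him (le_antisymm (not_lt.1 fun hmi => hm (hi m hmi))
          (min'_le _ _ (mem_filter.2 ⟨mem_univ i, hi0⟩)))
      · rfl
    · exact fun h => (h (mem_univ m)).elim
  · refine (sum_eq_zero fun i _ => ?_).symm
    have hi : y i = 0 := by
      by_contra hi
      exact h ⟨i, mem_filter.2 ⟨mem_univ i, hi⟩⟩
    simp [hi]

theorem integral_ite_eq_zero_eq_one_sub {Ω E : Type*} [MeasurableSpace Ω] {μ : Measure Ω}
    [IsProbabilityMeasure μ] [MeasurableSpace E] [MeasurableSingletonClass E] [Zero E]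
    {X : Ω → E} (hX : Measurable X) :
    ∫ ω, (if X ω = 0 then 1 else 0 : ℝ) ∂μ = 1 - (μ {ω | X ω ≠ 0}).toReal := by
  have hset : MeasurableSet {ω | X ω = 0} := hX (measurableSet_singleton 0)
  have hcompl : {ω | X ω ≠ 0} = {ω | X ω = 0}ᶜ := rfl
  rw [hcompl, ← measureReal_def, probReal_compl_eq_one_sub hset, sub_sub_cancel,
    ← integral_indicator_one hset]
  rfl

theorem ProbabilityTheory.iIndepFun.integral_indicator_forall_lt_eq_zero {Ω ι : Type*}
    [MeasurableSpace Ω] {μ : Measure Ω} [Fintype ι] [LinearOrder ι] [LocallyFiniteOrderBot ι]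
    {Y : ι → Ω → ℝ} (hindep : iIndepFun Y μ) (hmeas : ∀ i, Measurable (Y i)) (i : ι) :
    ∫ ω, {ω | ∀ j < i, Y j ω = 0}.indicator (Y i) ω ∂μ =
      (∏ j ∈ Iio i, (1 - (μ {ω | Y j ω ≠ 0}).toReal)) * ∫ ω, Y i ω ∂μ := by
  have := hindep.isProbabilityMeasure
  let f : ι → ℝ → ℝ := fun j x => if j < i then (if x = 0 then 1 else 0) else if j = i then x else 1
  have hf : ∀ j, Measurable (f j) := fun j => by
    dsimp only [f]; split_ifs
    exacts [measurable_const.ite (measurableSet_singleton 0) measurable_const, measurable_id,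
      measurable_const]
  have hprod : ∀ ω, {ω | ∀ j < i, Y j ω = 0}.indicator (Y i) ω = ∏ j, f j (Y j ω) := fun ω => by
    rw [prod_ite_lt_ite_eq i (fun j => if Y j ω = 0 then 1 else 0) (fun j => Y j ω), prod_boole]
    simp only [mem_Iio, Set.indicator_apply, Set.mem_ofPred_eq, ite_mul, one_mul, zero_mul]
  rw [integral_congr_ae (.of_forall hprod),
    hindep.integral_fun_prod_comp (fun j => (hmeas j).aemeasurable)
      fun j => (hf j).aestronglyMeasurable]
  have hfactor : ∀ j, ∫ ω, f j (Y j ω) ∂μ =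
      if j < i then 1 - (μ {ω | Y j ω ≠ 0}).toReal else if j = i then ∫ ω, Y j ω ∂μ else 1 := by
    intro j
    dsimp only [f]
    split_ifs
    exacts [integral_ite_eq_zero_eq_one_sub (hmeas j), rfl, by simp]
  simp only [hfactor, prod_ite_lt_ite_eq]

theorem stmt0_general {Ω : Type*} [MeasurableSpace Ω] (μ : Measure Ω)
    (n : ℕ) (Y : Fin n → Ω → ℝ)
    (hmeas : ∀ i, Measurable (Y i))
    (hint : ∀ i, Integrable (Y i) μ)
    (hnonneg : ∀ i ω, 0 ≤ Y i ω)
    (hindep : iIndepFun Y μ)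
    (u w : Fin n → ℝ)
    (hu : ∀ i, u i = (μ {ω | Y i ω ≠ 0}).toReal)
    (hw : ∀ i, w i = ∫ ω, Y i ω ∂μ)
    (hupos : ∀ i, 0 < u i)
    (hratio : Antitone fun i => w i / u i)
    (husum : ∑ i, u i ≤ 1)
    (Z : Ω → ℝ)
    (hZ : ∀ ω, Z ω =
      if h : (Finset.univ.filter fun i => Y i ω ≠ 0).Nonempty
      then Y ((Finset.univ.filter fun i => Y i ω ≠ 0).min' h) ω
      else 0) :
    (∫ ω, Z ω ∂μ) = (∑ i, (∏ i' ∈ Finset.Iio i, (1 - u i')) * w i) ∧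
    (1 - 1 / Real.exp 1) * (∑ i, w i) ≤ ∫ ω, Z ω ∂μ := by
  have hA : ∀ i, MeasurableSet {ω | ∀ j < i, Y j ω = 0} := fun i => by
    measurability
  have hZsum : ∀ ω, Z ω = ∑ i, {ω | ∀ j < i, Y j ω = 0}.indicator (Y i) ω := fun ω => by
    simp only [hZ, first_nonzero_eq_sum_ite_forall_lt, Set.indicator_apply, Set.mem_ofPred_eq]
    congr!
  have hEZ : ∫ ω, Z ω ∂μ = ∑ i, (∏ j ∈ Iio i, (1 - u j)) * w i := by
    rw [integral_congr_ae (.of_forall hZsum),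
      integral_finsetSum _ fun i _ => (hint i).indicator (hA i)]
    simp only [hindep.integral_indicator_forall_lt_eq_zero hmeas, ← hu, ← hw]
  have hw0 : ∀ i, 0 ≤ w i := fun i => hw i ▸ integral_nonneg (hnonneg i)
  exact ⟨hEZ, hEZ ▸ one_sub_inv_exp_mul_sum_le_sum_prod_Iio_mul hupos hw0 hratio husum⟩

/-- Let `Y 1, ..., Y n` be independent nonnegative random variables with
`u i = Pr[Y i ≠ 0] > 0` and `w i = E[Y i]`, with nonincreasing ratios `w i / u i`
and `∑ u i ≤ 1`.  Let `Z` be the random variable returning the first nonzero value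
among `Y 1, Y 2, ...` (and `0` if all are zero).  Then
`E[Z] = ∑ i (∏_{i' < i} (1 - u i')) * w i ≥ (1 - 1/e) * ∑ i w i`. -/
theorem stmt0 {Ω : Type*} [MeasurableSpace Ω] (μ : Measure Ω) [IsProbabilityMeasure μ]
    (n : ℕ) (Y : Fin n → Ω → ℝ)
    (hmeas : ∀ i, Measurable (Y i))
    (hint : ∀ i, Integrable (Y i) μ)
    (hnonneg : ∀ i ω, 0 ≤ Y i ω)
    (hindep : iIndepFun Y μ)
    (u w : Fin n → ℝ)
    (hu : ∀ i, u i = (μ {ω | Y i ω ≠ 0}).toReal)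
    (hw : ∀ i, w i = ∫ ω, Y i ω ∂μ)
    (hupos : ∀ i, 0 < u i)
    (hratio : Antitone fun i => w i / u i)
    (husum : ∑ i, u i ≤ 1)
    (Z : Ω → ℝ)
    (hZ : ∀ ω, Z ω =
      if h : (Finset.univ.filter fun i => Y i ω ≠ 0).Nonempty
      then Y ((Finset.univ.filter fun i => Y i ω ≠ 0).min' h) ω
      else 0) :
    (∫ ω, Z ω ∂μ) = (∑ i, (∏ i' ∈ Finset.Iio i, (1 - u i')) * w i) ∧
    (1 - 1 / Real.exp 1) * (∑ i, w i) ≤ ∫ ω, Z ω ∂μ :=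
  stmt0_general μ n Y hmeas hint hnonneg hindep u w hu hw hupos hratio husum Z hZ
end

section
/- Let u_1, ..., u_n ∈ (0,1] and w_1, ..., w_n ≥ 0 be reals with w_1/u_1 ≥ w_2/u_2 ≥ ... ≥ w_n/u_n, and set λ = (Σ_{i=1}^n w_i)/(Σ_{i=1}^n u_i). Then F({(w_i,u_i)}) := Σ_{i=1}^n (Π_{i'<i} (1 − u_{i'})) · w_i ≥ λ · (1 − Π_{i=1}^n (1 − u_i)). -/
/-!
Write `Q i = ∏_{i' < i} (1 - u i')`. The sequence `Q` telescopes, `∑ u i * Q i = 1 - ∏ (1 - u i)`,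
and it is antitone, as is the ratio `r i = w i / u i`. The inequality is therefore the weighted
Chebyshev sum inequality `(∑ u r) (∑ u Q) ≤ (∑ u) (∑ u r Q)` with weights `u`, since `u r = w`.
-/

open Finset

section Chebyshev

variable {ι α : Type*} [CommRing α] [LinearOrder α] [IsStrictOrderedRing α]

theorem MonovaryOn.sum_mul_sum_le_sum_mul_sum_weighted {s : Finset ι} {p f g : ι → α}
    (hp : ∀ i ∈ s, 0 ≤ p i) (hfg : MonovaryOn f g s) :
    (∑ i ∈ s, p i * f i) * ∑ i ∈ s, p i * g i ≤ (∑ i ∈ s, p i) * ∑ i ∈ s, p i * (f i * g i) := by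
  have hexpand : ∑ i ∈ s, ∑ j ∈ s, p i * p j * ((f j - f i) * (g j - g i)) =
      2 * ((∑ i ∈ s, p i) * ∑ i ∈ s, p i * (f i * g i) -
        (∑ i ∈ s, p i * f i) * ∑ i ∈ s, p i * g i) := by
    calc ∑ i ∈ s, ∑ j ∈ s, p i * p j * ((f j - f i) * (g j - g i))
        = ∑ i ∈ s, ∑ j ∈ s, (p i * (p j * (f j * g j)) + p i * (f i * g i) * p j
            - p i * g i * (p j * f j) - p i * f i * (p j * g j)) :=
          sum_congr rfl fun i _ => sum_congr rfl fun j _ => by ring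
      _ = _ := by
          simp only [sum_add_distrib, sum_sub_distrib, ← mul_sum, ← sum_mul]
          ring
  have hnonneg : 0 ≤ ∑ i ∈ s, ∑ j ∈ s, p i * p j * ((f j - f i) * (g j - g i)) :=
    sum_nonneg fun i hi => sum_nonneg fun j hj =>
      mul_nonneg (mul_nonneg (hp i hi) (hp j hj)) (hfg.sub_mul_sub_nonneg hi hj)
  linarith

end Chebyshev

section ProdIio

variable {ι R : Type*} [LinearOrder ι] [LocallyFiniteOrderBot ι]

theorem sum_mul_prod_Iio_one_sub [Fintype ι] [CommRing R] (u : ι → R) :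
    ∑ i, u i * ∏ j ∈ Iio i, (1 - u j) = 1 - ∏ i, (1 - u i) := by
  rw [prod_one_sub_ordered]
  simp only [filter_gt_eq_Iio, sub_sub_cancel]

theorem antitone_prod_Iio_one_sub [CommRing R] [PartialOrder R] [IsOrderedRing R] {u : ι → R}
    (hu₀ : ∀ i, 0 ≤ u i) (hu₁ : ∀ i, u i ≤ 1) :
    Antitone fun i => ∏ j ∈ Iio i, (1 - u j) :=
  (prod_anti_set_of_le_one (fun i => sub_nonneg.2 (hu₁ i)) fun i => sub_le_self _ (hu₀ i))
    |>.comp_monotone fun _ _ => Iio_subset_Iio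

end ProdIio

theorem stmt1_general (n : ℕ) (u w : Fin n → ℝ)
    (hu : ∀ i, u i ∈ Set.Ioc (0 : ℝ) 1)
    (hratio : Antitone fun i => w i / u i) :
    ((∑ i, w i) / (∑ i, u i)) * (1 - ∏ i, (1 - u i)) ≤
      ∑ i, (∏ i' ∈ Finset.Iio i, (1 - u i')) * w i := by
  rcases isEmpty_or_nonempty (Fin n) with _ | _
  · simp
  set Q := fun i => ∏ j ∈ Iio i, (1 - u j)
  have hw_eq : ∀ i, w i = u i * (w i / u i) := fun i => (mul_div_cancel₀ _ (hu i).1.ne').symm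
  have hQ : Antitone Q := antitone_prod_Iio_one_sub (fun i => (hu i).1.le) fun i => (hu i).2
  have hcheb := MonovaryOn.sum_mul_sum_le_sum_mul_sum_weighted (s := univ) (p := u)
    (fun i _ => (hu i).1.le) ((hratio.monovary hQ).monovaryOn _)
  have hsum_pos : 0 < ∑ i, u i := sum_pos (fun i _ => (hu i).1) univ_nonempty
  rw [← sum_mul_prod_Iio_one_sub, div_mul_eq_mul_div, div_le_iff₀ hsum_pos]
  calc (∑ i, w i) * ∑ i, u i * Q i
      = (∑ i, u i * (w i / u i)) * ∑ i, u i * Q i := by simp only [← hw_eq]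
    _ ≤ (∑ i, u i) * ∑ i, u i * (w i / u i * Q i) := hcheb
    _ = (∑ i, Q i * w i) * ∑ i, u i := by
        rw [mul_comm]
        congr 1
        exact sum_congr rfl fun i _ => by rw [← mul_assoc, ← hw_eq i, mul_comm]

/-- For `u i ∈ (0,1]` and `w i ≥ 0` with nonincreasing ratios `w i / u i`, and
`λ = (∑ w i) / (∑ u i)`, we have
`F = ∑ i (∏_{i' < i} (1 - u i')) * w i ≥ λ * (1 - ∏ i (1 - u i))`. -/
theorem stmt1 (n : ℕ) (u w : Fin n → ℝ)
    (hu : ∀ i, u i ∈ Set.Ioc (0 : ℝ) 1)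
    (hw : ∀ i, 0 ≤ w i)
    (hratio : Antitone fun i => w i / u i) :
    ((∑ i, w i) / (∑ i, u i)) * (1 - ∏ i, (1 - u i)) ≤
      ∑ i, (∏ i' ∈ Finset.Iio i, (1 - u i')) * w i :=
  stmt1_general n u w hu hratio
end

section
/- If q_1, ..., q_n ∈ [0,1] are reals with Σ_{i=1}^n q_i ≤ 1, then 1 − Π_{i=1}^n (1 − q_i) ≥ (1 − 1/e) · Σ_{i=1}^n q_i. -/
/-!
Since `1 - x ≤ exp (-x)`, the product `∏ (1 - q i)` is at most `exp (-s)` with `s = ∑ q i`;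
by convexity of `exp`, on `s ∈ [0, 1]` the function `exp (-s)` lies below its chord
`1 - (1 - 1/e) s` between `s = 0` and `s = 1`.
-/

open Finset

namespace Real

theorem prod_one_sub_le_exp_neg_sum {ι : Type*} (s : Finset ι) {f : ι → ℝ}
    (hf : ∀ i ∈ s, f i ≤ 1) : ∏ i ∈ s, (1 - f i) ≤ exp (-∑ i ∈ s, f i) :=
  calc ∏ i ∈ s, (1 - f i)
      ≤ ∏ i ∈ s, exp (-f i) :=
        prod_le_prod (fun i hi ↦ sub_nonneg.2 (hf i hi))
          fun i _ ↦ by linarith [add_one_le_exp (-f i)]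
    _ = exp (-∑ i ∈ s, f i) := by rw [← exp_sum, sum_neg_distrib]

theorem exp_neg_le_one_sub_mul_of_mem_Icc {x : ℝ} (hx : x ∈ Set.Icc (0 : ℝ) 1) :
    exp (-x) ≤ 1 - (1 - exp (-1)) * x := by
  have hchord := convexOn_exp.2 (Set.mem_univ 0) (Set.mem_univ (-1))
    (sub_nonneg.2 hx.2) hx.1 (sub_add_cancel 1 x)
  simp only [smul_eq_mul, mul_zero, mul_neg_one, zero_add, exp_zero, mul_one] at hchord
  linarith

end Real

/-- If `q 1, ..., q n ∈ [0,1]` are reals with `∑ q i ≤ 1`, then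
`1 - ∏ (1 - q i) ≥ (1 - 1/e) * ∑ q i`. -/
theorem stmt3 (n : ℕ) (q : Fin n → ℝ)
    (hq : ∀ i, q i ∈ Set.Icc (0 : ℝ) 1)
    (hsum : ∑ i, q i ≤ 1) :
    (1 - 1 / Real.exp 1) * ∑ i, q i ≤ 1 - ∏ i, (1 - q i) := by
  have hprod := Real.prod_one_sub_le_exp_neg_sum univ fun i _ ↦ (hq i).2
  have hchord := Real.exp_neg_le_one_sub_mul_of_mem_Icc
    ⟨sum_nonneg fun i _ ↦ (hq i).1, hsum⟩
  rw [one_div, ← Real.exp_neg]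
  linarith
end

section
/- Fix reals ρ ∈ (0,1], α ∈ (0,ρ], and σ > 1. Let (B_t)_{t≥1} be i.i.d. Bernoulli(α) random variables, and define the token-deficit process (Z_t)_{t≥0} by Z_0 = 0 and Z_{t+1} = min(σ, max(Z_t − ρ, 0) + B_{t+1}). Let τ = inf{t ≥ 0 : Z_t > σ − 1}, and assume τ is almost surely finite with E[τ] < ∞. Then E[τ] ≥ (σ − 1)²/ρ, and consequently E[Σ_{t=1}^{τ} B_t] = α · E[τ] ≥ (σ − 1)² · α/ρ. -/
/-!
On the event `{t < τ}` the deficit is at most `σ - 1`, so the cap `σ` is inactive and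
`Z (t + 1) = max (Z t - ρ) 0 + B (t + 1)`. As `B (t + 1)` is Bernoulli(α) and independent of the
past, a direct computation gives `E[Z (t + 1)² - Z t² | ℱ t] ≤ α ≤ ρ` there: draining `ρ ≥ α` per
step outweighs the arrivals. Summing these bounded increments up to the integrable time `τ`
(dominated convergence) gives `(σ - 1)² ≤ E[Z τ²] ≤ α E[τ]`. The same stopped sum for `B (t + 1)`,
whose conditional mean is exactly `α`, is Wald's identity `E[∑_{t ≤ τ} B t] = α E[τ]`.
-/

open Finset MeasureTheory ProbabilityTheory Filter Topology

section FirstPassage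

variable {Ω : Type*} {X : ℕ → Ω → ℝ} {c : ℝ} {τ : Ω → ℕ}

/- Since `sInf ∅ = 0`, the event `{t < τ}` also asks that the level be crossed at all, so it is
determined by the path up to time `t` only off the event that the level is never crossed. -/
theorem setOf_lt_eq_of_eq_sInf (hτ : ∀ ω, τ ω = sInf {u | c < X u ω}) (t : ℕ) :
    {ω | t < τ ω} = {ω | ∃ u, c < X u ω} ∩ {ω | ∀ u ≤ t, X u ω ≤ c} := by
  ext ω
  simp only [Set.mem_ofPred_eq, Set.mem_inter_iff, hτ]
  constructor
  · intro h
    refine ⟨?_, fun u hu => not_lt.1 fun hc => (Nat.sInf_le hc).not_gt (hu.trans_lt h)⟩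
    by_contra! hne
    rw [show {u | c < X u ω} = ∅ from Set.eq_empty_of_forall_notMem fun u hu => (hne u).not_gt hu,
      Nat.sInf_empty] at h
    exact Nat.not_lt_zero t h
  · rintro ⟨hne, hle⟩
    by_contra! h
    exact (hle _ h).not_gt (Nat.sInf_mem hne)

theorem measurableSet_setOf_forall_le {m : MeasurableSpace Ω} {ℱ : Filtration ℕ m}
    (hX : ∀ t, Measurable[ℱ t] (X t)) (t : ℕ) : MeasurableSet[ℱ t] {ω | ∀ u ≤ t, X u ω ≤ c} := by
  simp only [Set.ofPred_forall]
  exact .iInter fun u => .iInter fun hu =>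
    measurableSet_le ((hX u).mono (ℱ.mono hu) le_rfl) measurable_const

variable [MeasurableSpace Ω]

theorem measurable_of_eq_sInf (hX : ∀ t, Measurable (X t))
    (hτ : ∀ ω, τ ω = sInf {u | c < X u ω}) : Measurable τ := by
  refine measurable_of_Ioi fun t => ?_
  change MeasurableSet {ω | t < τ ω}
  simp only [setOf_lt_eq_of_eq_sInf hτ, Set.ofPred_exists, Set.ofPred_forall]
  exact (MeasurableSet.iUnion fun u => measurableSet_lt measurable_const (hX u)).inter
    (.iInter fun u => .iInter fun _ => measurableSet_le (hX u) measurable_const)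

theorem setOf_lt_ae_eq_of_eq_sInf {μ : Measure Ω} (hτ : ∀ ω, τ ω = sInf {u | c < X u ω})
    (hcross : ∀ᵐ ω ∂μ, ∃ u, c < X u ω) (t : ℕ) :
    {ω | t < τ ω} =ᵐ[μ] {ω | ∀ u ≤ t, X u ω ≤ c} := by
  rw [setOf_lt_eq_of_eq_sInf hτ]
  refine inter_ae_eq_right_of_ae_eq_univ (ae_eq_univ.2 ?_)
  rw [Set.compl_ofPred]
  exact ae_iff.1 hcross

end FirstPassage

section StoppedSum

variable {Ω : Type*} {τ : Ω → ℕ} {D : ℕ → Ω → ℝ} {C : ℝ}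

theorem sum_range_min_eq_sum_indicator (T : ℕ) (ω : Ω) :
    ∑ t ∈ range (min T (τ ω)), D t ω = ∑ t ∈ range T, {ω | t < τ ω}.indicator (D t) ω := by
  simp only [Set.indicator_apply, Set.mem_ofPred_eq, ← sum_filter]
  congr 1
  ext t
  simp only [mem_range, mem_filter]
  omega

variable [MeasurableSpace Ω] {μ : Measure Ω}

theorem measurable_apply_index {β : Type*} [MeasurableSpace β] {F : ℕ → Ω → β}
    (hF : ∀ n, Measurable (F n)) (hτ : Measurable τ) : Measurable fun ω => F (τ ω) ω :=
  (measurable_from_prod_countable_left (f := fun p : Ω × ℕ => F p.2 p.1) hF).comp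
    (measurable_id.prodMk hτ)

theorem tendsto_integral_sum_range_min (hτ : Measurable τ)
    (hτint : Integrable (fun ω => (τ ω : ℝ)) μ) (hD : ∀ t, Measurable (D t))
    (hDC : ∀ t ω, |D t ω| ≤ C) :
    Tendsto (fun T => ∫ ω, ∑ t ∈ range (min T (τ ω)), D t ω ∂μ) atTop
      (𝓝 (∫ ω, ∑ t ∈ range (τ ω), D t ω ∂μ)) := by
  refine tendsto_integral_of_dominated_convergence (fun ω => C * τ ω)
    (fun T => ((measurable_apply_index (fun n => measurable_sum _ fun t _ => hD t)
      ((measurable_const (a := T)).min hτ))).aestronglyMeasurable)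
    (hτint.const_mul C) (fun T => ae_of_all _ fun ω => ?_)
    (ae_of_all _ fun ω => tendsto_atTop_of_eventually_const fun T hT => by rw [min_eq_right hT])
  have hC : 0 ≤ C := (abs_nonneg _).trans (hDC 0 ω)
  calc ‖∑ t ∈ range (min T (τ ω)), D t ω‖
      ≤ ∑ t ∈ range (min T (τ ω)), |D t ω| := abs_sum_le_sum_abs _ _
    _ ≤ #(range (min T (τ ω))) • C := sum_le_card_nsmul _ _ C fun t _ => hDC t ω
    _ ≤ C * τ ω := by
        rw [card_range, nsmul_eq_mul, mul_comm]
        exact mul_le_mul_of_nonneg_left (by exact_mod_cast min_le_right _ _) hC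

variable [IsFiniteMeasure μ]

theorem integral_sum_range_min (hτ : Measurable τ) (hD : ∀ t, Measurable (D t))
    (hDC : ∀ t ω, |D t ω| ≤ C) (T : ℕ) :
    ∫ ω, ∑ t ∈ range (min T (τ ω)), D t ω ∂μ
      = ∑ t ∈ range T, ∫ ω in {ω | t < τ ω}, D t ω ∂μ := by
  have hset : ∀ t, MeasurableSet {ω | t < τ ω} := fun t => hτ measurableSet_Ioi
  simp_rw [sum_range_min_eq_sum_indicator]
  rw [integral_finsetSum _ fun t _ =>
    (Integrable.of_bound (hD t).aestronglyMeasurable C (ae_of_all _ (hDC t))).indicator (hset t)]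
  exact sum_congr rfl fun t _ => integral_indicator (hset t)

theorem integral_sum_range_le_mul_integral (hτ : Measurable τ)
    (hτint : Integrable (fun ω => (τ ω : ℝ)) μ) (hD : ∀ t, Measurable (D t))
    (hDC : ∀ t ω, |D t ω| ≤ C) {c : ℝ}
    (h : ∀ t, ∫ ω in {ω | t < τ ω}, D t ω ∂μ ≤ c * μ.real {ω | t < τ ω}) :
    ∫ ω, ∑ t ∈ range (τ ω), D t ω ∂μ ≤ c * ∫ ω, (τ ω : ℝ) ∂μ := by
  have hτlim : Tendsto (fun T => ∑ t ∈ range T, μ.real {ω | t < τ ω}) atTop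
      (𝓝 (∫ ω, (τ ω : ℝ) ∂μ)) := by
    convert tendsto_integral_sum_range_min (μ := μ) (D := fun _ _ => (1 : ℝ)) (C := 1) hτ hτint
      (fun _ => measurable_const) (by simp) using 2 with T
    · rw [integral_sum_range_min (D := fun _ _ => (1 : ℝ)) (C := 1) hτ (fun _ => measurable_const)
        (by simp)]
      simp
    · simp
  refine le_of_tendsto_of_tendsto' (tendsto_integral_sum_range_min hτ hτint hD hDC)
    (hτlim.const_mul c) fun T => ?_
  rw [integral_sum_range_min hτ hD hDC, mul_sum]
  exact sum_le_sum fun t _ => h t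

theorem integral_sum_range_eq_mul_integral (hτ : Measurable τ)
    (hτint : Integrable (fun ω => (τ ω : ℝ)) μ) (hD : ∀ t, Measurable (D t))
    (hDC : ∀ t ω, |D t ω| ≤ C) {c : ℝ}
    (h : ∀ t, ∫ ω in {ω | t < τ ω}, D t ω ∂μ = c * μ.real {ω | t < τ ω}) :
    ∫ ω, ∑ t ∈ range (τ ω), D t ω ∂μ = c * ∫ ω, (τ ω : ℝ) ∂μ := by
  refine le_antisymm (integral_sum_range_le_mul_integral hτ hτint hD hDC fun t => (h t).le) ?_
  have := integral_sum_range_le_mul_integral (D := fun t ω => -D t ω) (c := -c) hτ hτint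
    (fun t => (hD t).neg) (by simpa using hDC) fun t => by rw [integral_neg, h t, neg_mul]
  simpa [sum_neg_distrib, integral_neg] using this

end StoppedSum

theorem ProbabilityTheory.iIndepFun.integral_mul_succ {Ω : Type*} {m : MeasurableSpace Ω}
    {μ : Measure Ω} {B : ℕ → Ω → ℝ} (hB : ∀ t, StronglyMeasurable (B t)) (hindep : iIndepFun B μ)
    {t : ℕ} {f : Ω → ℝ} (hf : Measurable[Filtration.natural B hB t] f) :
    ∫ ω, f ω * B (t + 1) ω ∂μ = (∫ ω, f ω ∂μ) * ∫ ω, B (t + 1) ω ∂μ := by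
  have hfB : IndepFun f (B (t + 1)) μ := (IndepFun_iff_Indep _ _ _).2
    (indep_of_indep_of_le_left (hindep.indep_comap_natural_of_lt hB t.lt_succ_self).symm
      hf.comap_le)
  exact hfB.integral_fun_mul_eq_mul_integral
    (hf.mono (Filtration.le _ t) le_rfl).aestronglyMeasurable (hB _).aestronglyMeasurable

theorem integral_eq_of_eq_zero_or_eq_one {Ω : Type*} [MeasurableSpace Ω] {μ : Measure Ω}
    {f : Ω → ℝ} (hf : Measurable f) (h01 : ∀ ω, f ω = 0 ∨ f ω = 1) {a : ℝ} (ha : 0 ≤ a)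
    (hμ : μ {ω | f ω = 1} = ENNReal.ofReal a) : ∫ ω, f ω ∂μ = a := by
  have hind : f = {ω | f ω = 1}.indicator 1 := by
    funext ω
    rcases h01 ω with h | h <;> simp [h]
  conv_lhs => rw [hind]
  rw [integral_indicator_one (measurableSet_eq_fun hf measurable_const), measureReal_def, hμ,
    ENNReal.toReal_ofReal ha]

theorem measurable_natural_of_succ {Ω : Type*} {m : MeasurableSpace Ω} {B Z : ℕ → Ω → ℝ}
    (hB : ∀ t, StronglyMeasurable (B t)) {F : ℝ → ℝ → ℝ} (hF : Measurable (Function.uncurry F))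
    {z₀ : ℝ} (hZ0 : ∀ ω, Z 0 ω = z₀) (hZ : ∀ t ω, Z (t + 1) ω = F (Z t ω) (B (t + 1) ω)) :
    ∀ t, Measurable[Filtration.natural B hB t] (Z t)
  | 0 => by
    rw [funext hZ0]
    exact measurable_const
  | t + 1 => by
    rw [funext (hZ t)]
    exact hF.comp (((measurable_natural_of_succ hB hF hZ0 hZ t).mono
      ((Filtration.natural B hB).mono t.le_succ) le_rfl).prodMk
      (Filtration.stronglyAdapted_natural hB (t + 1)).measurable)

/- The hypothesis `hB` below says that `B (t + 1)` has conditional mean `α` given `ℱ t`. -/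
section Filtered

variable {Ω : Type*} {m : MeasurableSpace Ω} {μ : Measure Ω} {ℱ : Filtration ℕ m}
  {B : ℕ → Ω → ℝ} {α : ℝ}

theorem setIntegral_mul_succ
    (hB : ∀ t f, Measurable[ℱ t] f → ∫ ω, f ω * B (t + 1) ω ∂μ = α * ∫ ω, f ω ∂μ)
    {t : ℕ} {A : Set Ω} (hA : MeasurableSet[ℱ t] A) {f : Ω → ℝ} (hf : Measurable[ℱ t] f) :
    ∫ ω in A, f ω * B (t + 1) ω ∂μ = α * ∫ ω in A, f ω ∂μ := by
  rw [← integral_indicator (ℱ.le t _ hA), ← integral_indicator (ℱ.le t _ hA)]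
  simpa only [Set.indicator_mul_left] using hB t _ (hf.indicator hA)

theorem integral_sum_Icc_eq_mul_integral [IsFiniteMeasure μ] (hBm : ∀ t, Measurable (B t))
    {C : ℝ} (hBC : ∀ t ω, |B (t + 1) ω| ≤ C)
    (hB : ∀ t f, Measurable[ℱ t] f → ∫ ω, f ω * B (t + 1) ω ∂μ = α * ∫ ω, f ω ∂μ)
    {τ : Ω → ℕ} (hτ : Measurable τ) (hτint : Integrable (fun ω => (τ ω : ℝ)) μ)
    {A : ℕ → Set Ω} (hA : ∀ t, MeasurableSet[ℱ t] (A t)) (hτA : ∀ t, {ω | t < τ ω} =ᵐ[μ] A t) :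
    ∫ ω, ∑ t ∈ Icc 1 (τ ω), B t ω ∂μ = α * ∫ ω, (τ ω : ℝ) ∂μ := by
  have hshift : ∀ n ω, ∑ t ∈ Icc 1 n, B t ω = ∑ t ∈ range n, B (t + 1) ω := fun n ω => by
    rw [range_eq_Ico, sum_Ico_add' (B · ω) 0 n 1]
    rfl
  simp_rw [hshift]
  refine integral_sum_range_eq_mul_integral hτ hτint (fun t => hBm (t + 1)) hBC fun t => ?_
  rw [setIntegral_congr_set (hτA t), measureReal_congr (hτA t)]
  simpa using setIntegral_mul_succ hB (hA t) (f := fun _ => 1) measurable_const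

end Filtered

section TokenBucket

variable {ρ σ : ℝ}

theorem min_max_add_sq_sub_sq {z b : ℝ} (hρ : 0 ≤ ρ) (hz : 0 ≤ z) (hzσ : z ≤ σ - 1)
    (hb : b = 0 ∨ b = 1) :
    min σ (max (z - ρ) 0 + b) ^ 2 - z ^ 2
      = max (z - ρ) 0 ^ 2 - z ^ 2 + (2 * max (z - ρ) 0 + 1) * b := by
  have hy : max (z - ρ) 0 + b ≤ σ := by
    have : max (z - ρ) 0 ≤ z := max_le (by linarith) hz
    rcases hb with rfl | rfl <;> linarith
  rw [min_eq_right hy]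
  rcases hb with rfl | rfl <;> ring

theorem sq_max_sub_sq_add_mul_le {α z : ℝ} (hαρ : α ≤ ρ) :
    max (z - ρ) 0 ^ 2 - z ^ 2 + α * (2 * max (z - ρ) 0 + 1) ≤ α := by
  rcases le_total z ρ with h | h
  · rw [max_eq_right (by linarith)]
    nlinarith
  · rw [max_eq_left (by linarith)]
    nlinarith [mul_nonneg (sub_nonneg.2 h) (sub_nonneg.2 hαρ), sq_nonneg ρ]

variable {Ω : Type*} {m : MeasurableSpace Ω} {B Z : ℕ → Ω → ℝ}

theorem mem_Icc_of_eq_min_max_add (hσ : 0 ≤ σ) (hB : ∀ t ω, 0 ≤ B (t + 1) ω) (hZ0 : ∀ ω, Z 0 ω = 0)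
    (hZ : ∀ t ω, Z (t + 1) ω = min σ (max (Z t ω - ρ) 0 + B (t + 1) ω)) :
    ∀ t ω, Z t ω ∈ Set.Icc 0 σ
  | 0, ω => by simp [hZ0, hσ]
  | t + 1, ω => by
    rw [hZ]
    exact ⟨le_min hσ (add_nonneg (le_max_right _ _) (hB t ω)), min_le_left _ _⟩

variable {μ : Measure Ω} [IsFiniteMeasure μ] {ℱ : Filtration ℕ m} {α : ℝ}

theorem setIntegral_sq_succ_sub_sq_le (hρ : 0 ≤ ρ) (hαρ : α ≤ ρ) (hBm : ∀ t, Measurable (B t))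
    (hB01 : ∀ t ω, B (t + 1) ω = 0 ∨ B (t + 1) ω = 1)
    (hB : ∀ t f, Measurable[ℱ t] f → ∫ ω, f ω * B (t + 1) ω ∂μ = α * ∫ ω, f ω ∂μ)
    (hZℱ : ∀ t, Measurable[ℱ t] (Z t)) (hZσ : ∀ t ω, Z t ω ∈ Set.Icc 0 σ)
    (hZ : ∀ t ω, Z (t + 1) ω = min σ (max (Z t ω - ρ) 0 + B (t + 1) ω))
    {t : ℕ} {A : Set Ω} (hA : MeasurableSet[ℱ t] A) (hAZ : ∀ ω ∈ A, Z t ω ≤ σ - 1) :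
    ∫ ω in A, Z (t + 1) ω ^ 2 - Z t ω ^ 2 ∂μ ≤ α * μ.real A := by
  set y : Ω → ℝ := fun ω => max (Z t ω - ρ) 0
  have hy : Measurable[ℱ t] y := ((hZℱ t).sub_const ρ).max measurable_const
  have hyZ : ∀ ω, 0 ≤ y ω ∧ y ω ≤ Z t ω ∧ Z t ω ≤ σ := fun ω =>
    ⟨le_max_right _ _, max_le (by linarith) (hZσ t ω).1, (hZσ t ω).2⟩
  have hmA : MeasurableSet A := ℱ.le t _ hA
  have hym : Measurable y := hy.mono (ℱ.le t) le_rfl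
  have hZm : Measurable (Z t) := (hZℱ t).mono (ℱ.le t) le_rfl
  have hint : ∀ {f : Ω → ℝ} (C : ℝ), Measurable f → (∀ ω, |f ω| ≤ C) → IntegrableOn f A μ :=
    fun C hf hC => (Integrable.of_bound hf.aestronglyMeasurable C (ae_of_all _ hC)).integrableOn
  have hu : IntegrableOn (fun ω => y ω ^ 2 - Z t ω ^ 2) A μ :=
    hint (σ ^ 2) ((hym.pow_const 2).sub (hZm.pow_const 2)) fun ω => by
      obtain ⟨h0, h1, h2⟩ := hyZ ω
      exact abs_le.2 ⟨by nlinarith, by nlinarith⟩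
  have hv : IntegrableOn (fun ω => 2 * y ω + 1) A μ :=
    hint (2 * σ + 1) ((hym.const_mul 2).add_const 1) fun ω => by
      obtain ⟨h0, h1, h2⟩ := hyZ ω
      exact abs_le.2 ⟨by linarith, by linarith⟩
  have hvB : IntegrableOn (fun ω => (2 * y ω + 1) * B (t + 1) ω) A μ :=
    hint (2 * σ + 1) (hym.const_mul 2 |>.add_const 1 |>.mul (hBm _)) fun ω => by
      obtain ⟨h0, h1, h2⟩ := hyZ ω
      rcases hB01 t ω with h | h <;> rw [h] <;> exact abs_le.2 ⟨by linarith, by linarith⟩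
  calc ∫ ω in A, Z (t + 1) ω ^ 2 - Z t ω ^ 2 ∂μ
      = ∫ ω in A, (y ω ^ 2 - Z t ω ^ 2) + (2 * y ω + 1) * B (t + 1) ω ∂μ :=
        setIntegral_congr_fun hmA fun ω hω => by
          rw [hZ]
          exact min_max_add_sq_sub_sq hρ (hZσ t ω).1 (hAZ ω hω) (hB01 t ω)
    _ = ∫ ω in A, (y ω ^ 2 - Z t ω ^ 2) + α * (2 * y ω + 1) ∂μ := by
        rw [integral_add hu hvB, integral_add hu (hv.const_mul α), integral_const_mul,
          setIntegral_mul_succ hB hA ((hy.const_mul 2).add_const 1)]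
    _ ≤ ∫ _ in A, α ∂μ :=
        setIntegral_mono_on (hu.add (hv.const_mul α)) integrableOn_const hmA
          fun ω _ => sq_max_sub_sq_add_mul_le hαρ
    _ = α * μ.real A := by rw [setIntegral_const, smul_eq_mul, mul_comm]

theorem sq_sub_one_le_mul_integral {μ : Measure Ω} [IsProbabilityMeasure μ] (hσ : 1 ≤ σ)
    (hρ : 0 ≤ ρ) (hαρ : α ≤ ρ) (hBm : ∀ t, Measurable (B t))
    (hB01 : ∀ t ω, B (t + 1) ω = 0 ∨ B (t + 1) ω = 1)
    (hB : ∀ t f, Measurable[ℱ t] f → ∫ ω, f ω * B (t + 1) ω ∂μ = α * ∫ ω, f ω ∂μ)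
    (hZℱ : ∀ t, Measurable[ℱ t] (Z t)) (hZ0 : ∀ ω, Z 0 ω = 0)
    (hZ : ∀ t ω, Z (t + 1) ω = min σ (max (Z t ω - ρ) 0 + B (t + 1) ω))
    {τ : Ω → ℕ} (hτ : Measurable τ) (hτint : Integrable (fun ω => (τ ω : ℝ)) μ)
    (hτZ : ∀ᵐ ω ∂μ, σ - 1 < Z (τ ω) ω)
    (hτA : ∀ t, {ω | t < τ ω} =ᵐ[μ] {ω | ∀ u ≤ t, Z u ω ≤ σ - 1}) :
    (σ - 1) ^ 2 ≤ α * ∫ ω, (τ ω : ℝ) ∂μ := by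
  have hZm : ∀ t, Measurable (Z t) := fun t => (hZℱ t).mono (ℱ.le t) le_rfl
  have hZσ := mem_Icc_of_eq_min_max_add (by linarith)
    (fun t ω => by rcases hB01 t ω with h | h <;> simp [h]) hZ0 hZ
  have hZτ : Integrable (fun ω => Z (τ ω) ω ^ 2) μ :=
    .of_bound ((measurable_apply_index hZm hτ).pow_const 2).aestronglyMeasurable (σ ^ 2)
      (ae_of_all _ fun ω => by
        obtain ⟨h0, h1⟩ := hZσ (τ ω) ω
        simpa [abs_of_nonneg h0] using pow_le_pow_left₀ h0 h1 2)
  have hbound : ∀ t ω, |Z (t + 1) ω ^ 2 - Z t ω ^ 2| ≤ σ ^ 2 := fun t ω => by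
    obtain ⟨h0, h1⟩ := hZσ t ω
    obtain ⟨h2, h3⟩ := hZσ (t + 1) ω
    exact abs_le.2 ⟨by nlinarith, by nlinarith⟩
  have htel : ∀ ω, ∑ t ∈ range (τ ω), (Z (t + 1) ω ^ 2 - Z t ω ^ 2) = Z (τ ω) ω ^ 2 := fun ω => by
    rw [sum_range_sub (fun t => Z t ω ^ 2), hZ0]
    ring
  calc (σ - 1) ^ 2 = ∫ _, (σ - 1) ^ 2 ∂μ := by simp
    _ ≤ ∫ ω, Z (τ ω) ω ^ 2 ∂μ := integral_mono_ae (integrable_const _) hZτ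
        (hτZ.mono fun ω h => pow_le_pow_left₀ (by linarith) h.le 2)
    _ = ∫ ω, ∑ t ∈ range (τ ω), (Z (t + 1) ω ^ 2 - Z t ω ^ 2) ∂μ := by simp only [htel]
    _ ≤ α * ∫ ω, (τ ω : ℝ) ∂μ :=
        integral_sum_range_le_mul_integral hτ hτint
          (fun t => ((hZm _).pow_const 2).sub ((hZm t).pow_const 2)) hbound fun t => by
            rw [setIntegral_congr_set (hτA t), measureReal_congr (hτA t)]
            exact setIntegral_sq_succ_sub_sq_le hρ hαρ hBm hB01 hB hZℱ hZσ hZ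
              (measurableSet_setOf_forall_le hZℱ t) fun ω hω => hω t le_rfl

end TokenBucket

/-- Token bucket stopping-time bound.  With token rate `ρ ∈ (0,1]`, call-out
probability `α ∈ (0,ρ]` and bucket size `σ > 1`, let `B t` be i.i.d. Bernoulli(α)
indicators, `Z` the token-deficit process `Z 0 = 0`,
`Z (t+1) = min σ (max (Z t - ρ) 0 + B (t+1))`, and
`τ = inf {t | Z t > σ - 1}` (assumed a.s. finite and integrable).  Then
`E[τ] ≥ (σ-1)²/ρ`, and `E[∑_{t=1}^{τ} B t] = α E[τ] ≥ (σ-1)² α / ρ`. -/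
theorem stmt8 {Ω : Type*} [MeasurableSpace Ω] (μ : Measure Ω) [IsProbabilityMeasure μ]
    (ρ α σ : ℝ) (hρ : ρ ∈ Set.Ioc (0 : ℝ) 1) (hα : α ∈ Set.Ioc (0 : ℝ) ρ) (hσ : 1 < σ)
    (B : ℕ → Ω → ℝ)
    (hmeas : ∀ t, Measurable (B t))
    (hB01 : ∀ t ω, 1 ≤ t → B t ω = 0 ∨ B t ω = 1)
    (hBern : ∀ t, 1 ≤ t → μ {ω | B t ω = 1} = ENNReal.ofReal α)
    (hindep : iIndepFun B μ)
    (Z : ℕ → Ω → ℝ)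
    (hZ0 : ∀ ω, Z 0 ω = 0)
    (hZrec : ∀ t ω, Z (t + 1) ω = min σ (max (Z t ω - ρ) 0 + B (t + 1) ω))
    (τ : Ω → ℕ)
    (hτ : ∀ ω, τ ω = sInf {t | σ - 1 < Z t ω})
    (hτfin : ∀ᵐ ω ∂μ, ∃ t, σ - 1 < Z t ω)
    (hτint : Integrable (fun ω => (τ ω : ℝ)) μ) :
    (σ - 1) ^ 2 / ρ ≤ (∫ ω, (τ ω : ℝ) ∂μ) ∧
    (∫ ω, ∑ t ∈ Finset.Icc 1 (τ ω), B t ω ∂μ) = α * ∫ ω, (τ ω : ℝ) ∂μ ∧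
    (σ - 1) ^ 2 * α / ρ ≤ α * ∫ ω, (τ ω : ℝ) ∂μ := by
  obtain ⟨hρ0, -⟩ := hρ
  obtain ⟨hα0, hαρ⟩ := hα
  have hBsucc : ∀ t ω, B (t + 1) ω = 0 ∨ B (t + 1) ω = 1 := fun t ω => hB01 _ ω t.succ_pos
  set ℱ := Filtration.natural B fun t => (hmeas t).stronglyMeasurable
  have hBℱ : ∀ t f, Measurable[ℱ t] f → ∫ ω, f ω * B (t + 1) ω ∂μ = α * ∫ ω, f ω ∂μ :=
    fun t f hf => by rw [hindep.integral_mul_succ _ hf, mul_comm,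
      integral_eq_of_eq_zero_or_eq_one (hmeas _) (hBsucc t) hα0.le (hBern _ t.succ_pos)]
  have hZℱ : ∀ t, Measurable[ℱ t] (Z t) :=
    measurable_natural_of_succ _ (F := fun z b => min σ (max (z - ρ) 0 + b)) (by fun_prop) hZ0 hZrec
  have hτm := measurable_of_eq_sInf (fun t => (hZℱ t).mono (ℱ.le t) le_rfl) hτ
  have hτA := setOf_lt_ae_eq_of_eq_sInf hτ hτfin
  have hEτ : (σ - 1) ^ 2 / ρ ≤ ∫ ω, (τ ω : ℝ) ∂μ := by
    have := sq_sub_one_le_mul_integral hσ.le hρ0.le hαρ hmeas hBsucc hBℱ hZℱ hZ0 hZrec hτm hτint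
      (hτfin.mono fun ω hω => hτ ω ▸ Nat.sInf_mem hω) hτA
    rw [div_le_iff₀ hρ0]
    nlinarith [integral_nonneg (μ := μ) (f := fun ω => (τ ω : ℝ)) fun ω => by positivity]
  refine ⟨hEτ, ?_, ?_⟩
  · exact integral_sum_Icc_eq_mul_integral hmeas (C := 1)
      (fun t ω => by rcases hBsucc t ω with h | h <;> simp [h]) hBℱ hτm hτint
      (measurableSet_setOf_forall_le hZℱ) hτA
  · rw [mul_div_right_comm, mul_comm α]
    exact mul_le_mul_of_nonneg_right hEτ hα0.le
end

section
/- Fix reals ρ ∈ (0,1], α ∈ (0,ρ], and σ > 1. Let (B_t)_{t≥1} be i.i.d. Bernoulli(α) random variables, and define the token-deficit process (Z_t)_{t≥0} by Z_0 = 0 and Z_{t+1} = min(σ, max(Z_t − ρ, 0) + B_{t+1}). Then for every t ≥ 0, almost surely on the event {Z_t ≤ σ − 1}, the conditional expectation satisfies E[Z_{t+1}² | F_t] ≤ Z_t² + ρ. -/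
open Finset MeasureTheory ProbabilityTheory

/-!
Write `Y = max (Z t - ρ) 0`, which is `F t`-measurable, while `B (t+1) ∈ {0, 1}` is independent
of `F t` with mean `α`. Since `Z (t+1) ≤ Y + B (t+1)` and `B (t+1)² = B (t+1)`, we get
`Z (t+1)² ≤ Y² + (2Y + 1) B (t+1)`, whose conditional expectation given `F t` is
`Y² + (2Y + 1) α`; this is at most `Z t² + ρ` by an elementary inequality using `α ≤ ρ ≤ 1`.
-/

lemma sq_min_add_le_of_eq_zero_or_eq_one {σ y b : ℝ} (hσ : 0 ≤ σ) (hy : 0 ≤ y)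
    (hb : b = 0 ∨ b = 1) : min σ (y + b) ^ 2 ≤ y ^ 2 + (2 * y + 1) * b := by
  have hyb : 0 ≤ y + b := by rcases hb with rfl | rfl <;> linarith
  calc min σ (y + b) ^ 2 ≤ (y + b) ^ 2 := pow_le_pow_left₀ (le_min hσ hyb) (min_le_right _ _) 2
    _ = y ^ 2 + (2 * y + 1) * b := by rcases hb with rfl | rfl <;> ring

lemma sq_max_sub_add_mul_le {ρ α : ℝ} (hα : 0 ≤ α) (hαρ : α ≤ ρ) (hρ : ρ ≤ 1) (z : ℝ) :
    max (z - ρ) 0 ^ 2 + (2 * max (z - ρ) 0 + 1) * α ≤ z ^ 2 + ρ := by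
  rcases le_total (z - ρ) 0 with h | h
  · rw [max_eq_right h]
    nlinarith
  · rw [max_eq_left h]
    -- the left side equals `z² + ρ - 2z(ρ - α) - (ρ - α)(1 - ρ) - ρα`
    nlinarith [mul_nonneg (sub_nonneg.2 hαρ) (sub_nonneg.2 hρ), mul_nonneg hα (hα.trans hαρ),
      mul_nonneg (sub_nonneg.2 hαρ) (hα.trans (hαρ.trans (sub_nonneg.1 h)))]

section BiSupComap

variable {Ω ι β : Type*} {mΩ : MeasurableSpace Ω} [mβ : MeasurableSpace β] {B : ι → Ω → β}
  {I : Set ι}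

lemma biSup_comap_le (hB : ∀ i, Measurable (B i)) :
    ⨆ i ∈ I, MeasurableSpace.comap (B i) mβ ≤ mΩ :=
  iSup₂_le fun i _ => (hB i).comap_le

lemma measurable_biSup_comap {i : ι} (hi : i ∈ I) :
    Measurable[⨆ j ∈ I, MeasurableSpace.comap (B j) mβ] (B i) :=
  measurable_iff_comap_le.2 <|
    le_iSup₂ (f := fun j (_ : j ∈ I) => MeasurableSpace.comap (B j) mβ) i hi

lemma ProbabilityTheory.iIndepFun.indep_comap_biSup_comap {μ : Measure Ω}
    (hB : ∀ i, Measurable (B i)) (h : iIndepFun B μ) {i : ι} (hi : i ∉ I) :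
    Indep (MeasurableSpace.comap (B i) mβ) (⨆ j ∈ I, MeasurableSpace.comap (B j) mβ) μ :=
  indep_of_indep_of_le_left (indep_biSup_compl (fun j => (hB j).comap_le) h.iIndep I).symm <|
    le_iSup₂ (f := fun j (_ : j ∈ Iᶜ) => MeasurableSpace.comap (B j) mβ) i hi

end BiSupComap

section ConditionalExpectation

variable {Ω : Type*} {m mΩ : MeasurableSpace Ω} {μ : Measure Ω}

lemma integral_eq_measureReal_of_eq_zero_or_eq_one {X : Ω → ℝ} (hX : Measurable X)
    (h01 : ∀ ω, X ω = 0 ∨ X ω = 1) : μ[X] = μ.real {ω | X ω = 1} := by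
  have hX_eq : X = Set.indicator {ω | X ω = 1} 1 := by
    funext ω
    rcases h01 ω with h | h <;> simp [h]
  calc μ[X] = μ[Set.indicator {ω | X ω = 1} 1] := by rw [← hX_eq]
    _ = μ.real {ω | X ω = 1} := integral_indicator_one (hX (measurableSet_singleton 1))

lemma condExp_mul_indep_eq [IsFiniteMeasure μ] {f X : Ω → ℝ} {c : ℝ} (hm : m ≤ mΩ)
    (hf : StronglyMeasurable[m] f) (hf_bdd : ∀ᵐ ω ∂μ, ‖f ω‖ ≤ c) (hX : Measurable X)
    (hX_int : Integrable X μ)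
    (hind : Indep (MeasurableSpace.comap X inferInstance) m μ) :
    μ[f * X | m] =ᵐ[μ] fun ω => f ω * μ[X] := by
  filter_upwards [condExp_stronglyMeasurable_mul_of_bound hm hf hX_int c hf_bdd,
    condExp_indep_eq hX.comap_le hm (comap_measurable X).stronglyMeasurable hind] with ω h h'
  rw [h, Pi.mul_apply, h']

lemma condExp_sq_min_add_le [IsFiniteMeasure μ] {Y X : Ω → ℝ} {σ : ℝ} (hm : m ≤ mΩ)
    (hσ : 0 ≤ σ) (hY : Measurable[m] Y) (hY_Icc : ∀ ω, Y ω ∈ Set.Icc 0 σ) (hX : Measurable X)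
    (hX01 : ∀ ω, X ω = 0 ∨ X ω = 1) (hind : Indep (MeasurableSpace.comap X inferInstance) m μ) :
    μ[fun ω => min σ (Y ω + X ω) ^ 2 | m] ≤ᵐ[μ] fun ω => Y ω ^ 2 + (2 * Y ω + 1) * μ[X] := by
  have hY_meas : Measurable Y := hY.mono hm le_rfl
  have hX_int : Integrable X μ := .of_mem_Icc 0 1 hX.aemeasurable <| ae_of_all _ fun ω => by
    rcases hX01 ω with h | h <;> simp [h]
  have hY_bdd : ∀ ω, ‖2 * Y ω + 1‖ ≤ 2 * σ + 1 := fun ω => by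
    rw [Real.norm_of_nonneg (by linarith [(hY_Icc ω).1])]
    linarith [(hY_Icc ω).2]
  have hY2_int : Integrable (fun ω => Y ω ^ 2) μ :=
    .of_mem_Icc 0 (σ ^ 2) (hY_meas.pow_const 2).aemeasurable <| ae_of_all _
      fun ω => ⟨sq_nonneg _, pow_le_pow_left₀ (hY_Icc ω).1 (hY_Icc ω).2 2⟩
  have hYX_int : Integrable (fun ω => (2 * Y ω + 1) * X ω) μ :=
    hX_int.bdd_mul ((hY_meas.const_mul 2).add_const 1).aestronglyMeasurable (ae_of_all _ hY_bdd)
  have h_le : (fun ω => min σ (Y ω + X ω) ^ 2) ≤ᵐ[μ]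
      fun ω => Y ω ^ 2 + (2 * Y ω + 1) * X ω :=
    ae_of_all _ fun ω => sq_min_add_le_of_eq_zero_or_eq_one hσ (hY_Icc ω).1 (hX01 ω)
  have hmin_int : Integrable (fun ω => min σ (Y ω + X ω) ^ 2) μ :=
    (hY2_int.add hYX_int).mono'
      ((measurable_const.min (hY_meas.add hX)).pow_const 2).aestronglyMeasurable
      (h_le.mono fun ω h => (Real.norm_of_nonneg (sq_nonneg _)).trans_le h)
  filter_upwards [condExp_mono hmin_int (hY2_int.add hYX_int) h_le,
    condExp_add hY2_int hYX_int m,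
    condExp_mul_indep_eq hm ((hY.const_mul 2).add_const 1).stronglyMeasurable
      (ae_of_all _ hY_bdd) hX hX_int hind] with ω h_mono h_add h_mul
  refine h_mono.trans_eq (h_add.trans ?_)
  rw [Pi.add_apply, condExp_of_stronglyMeasurable hm (hY.pow_const 2).stronglyMeasurable hY2_int]
  exact congrArg _ h_mul

end ConditionalExpectation

section TokenDeficit

variable {Ω : Type*} {ρ σ : ℝ} {B Z : ℕ → Ω → ℝ}

lemma deficit_mem_Icc (hσ : 0 ≤ σ) (hB : ∀ t ω, 0 ≤ B (t + 1) ω) (hZ0 : ∀ ω, Z 0 ω = 0)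
    (hZrec : ∀ t ω, Z (t + 1) ω = min σ (max (Z t ω - ρ) 0 + B (t + 1) ω)) (t : ℕ) (ω : Ω) :
    Z t ω ∈ Set.Icc 0 σ := by
  cases t with
  | zero => simp [hZ0, hσ]
  | succ t =>
    rw [hZrec]
    exact ⟨le_min hσ (add_nonneg (le_max_right _ _) (hB t ω)), min_le_left _ _⟩

lemma measurable_deficit {m : ℕ → MeasurableSpace Ω} (hm : Monotone m)
    (hB : ∀ t, Measurable[m (t + 1)] (B (t + 1))) (hZ0 : ∀ ω, Z 0 ω = 0)
    (hZrec : ∀ t ω, Z (t + 1) ω = min σ (max (Z t ω - ρ) 0 + B (t + 1) ω)) (t : ℕ) :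
    Measurable[m t] (Z t) := by
  induction t with
  | zero => rw [funext hZ0]; exact measurable_const
  | succ t ih =>
    rw [funext (hZrec t)]
    exact measurable_const.min
      ((((ih.mono (hm t.le_succ) le_rfl).sub_const ρ).max measurable_const).add (hB t))

end TokenDeficit

/-- Token bucket drift bound.  With token rate `ρ ∈ (0,1]`, call-out probability
`α ∈ (0,ρ]` and bucket size `σ > 1`, let `B t` be i.i.d. Bernoulli(α) indicators
and `Z` the token-deficit process `Z 0 = 0`,
`Z (t+1) = min σ (max (Z t - ρ) 0 + B (t+1))`.  Let `F t` be the natural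
filtration `σ(B 1, ..., B t)`.  Then for every `t`, almost surely on the event
`{Z t ≤ σ - 1}`, we have `E[Z (t+1)² | F t] ≤ Z t² + ρ`. -/
theorem stmt9 {Ω : Type*} [MeasurableSpace Ω] (μ : Measure Ω) [IsProbabilityMeasure μ]
    (ρ α σ : ℝ) (hρ : ρ ∈ Set.Ioc (0 : ℝ) 1) (hα : α ∈ Set.Ioc (0 : ℝ) ρ) (hσ : 1 < σ)
    (B : ℕ → Ω → ℝ)
    (hmeas : ∀ t, Measurable (B t))
    (hB01 : ∀ t ω, 1 ≤ t → B t ω = 0 ∨ B t ω = 1)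
    (hBern : ∀ t, 1 ≤ t → μ {ω | B t ω = 1} = ENNReal.ofReal α)
    (hindep : iIndepFun B μ)
    (Z : ℕ → Ω → ℝ)
    (hZ0 : ∀ ω, Z 0 ω = 0)
    (hZrec : ∀ t ω, Z (t + 1) ω = min σ (max (Z t ω - ρ) 0 + B (t + 1) ω))
    (F : ℕ → MeasurableSpace Ω)
    (hF : ∀ t, F t = ⨆ s ∈ Set.Icc 1 t, MeasurableSpace.comap (B s) inferInstance) :
    ∀ t : ℕ, ∀ᵐ ω ∂μ, Z t ω ≤ σ - 1 →
      (μ[fun ω' => (Z (t + 1) ω') ^ 2|F t]) ω ≤ (Z t ω) ^ 2 + ρ := by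
  obtain ⟨-, hρ1⟩ := hρ
  obtain ⟨hα0, hαρ⟩ := hα
  have hσ0 : 0 ≤ σ := zero_le_one.trans hσ.le
  intro t
  have hB : ∀ s ω, B (s + 1) ω = 0 ∨ B (s + 1) ω = 1 := fun s ω => hB01 _ ω (Nat.le_add_left 1 s)
  have hZ_Icc := deficit_mem_Icc hσ0 (fun s ω => by rcases hB s ω with h | h <;> simp [h])
    hZ0 hZrec t
  have hF_le : F t ≤ ‹MeasurableSpace Ω› := by rw [hF]; exact biSup_comap_le hmeas
  have hZ_F : Measurable[F t] (Z t) := by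
    refine measurable_deficit (fun s u hsu => ?_) (fun s => ?_) hZ0 hZrec t
    · rw [hF, hF]; exact biSup_mono fun i hi => ⟨hi.1, hi.2.trans hsu⟩
    · rw [hF]; exact measurable_biSup_comap ⟨Nat.le_add_left 1 s, le_rfl⟩
  have hind : Indep (MeasurableSpace.comap (B (t + 1)) inferInstance) (F t) μ := by
    rw [hF]; exact hindep.indep_comap_biSup_comap hmeas (by simp)
  have hEB : μ[B (t + 1)] = α := by
    rw [integral_eq_measureReal_of_eq_zero_or_eq_one (hmeas _) (hB t), measureReal_def,
      hBern _ (Nat.le_add_left 1 t), ENNReal.toReal_ofReal hα0.le]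
  have hstep : μ[fun ω => Z (t + 1) ω ^ 2 | F t] ≤ᵐ[μ]
      fun ω => max (Z t ω - ρ) 0 ^ 2 + (2 * max (Z t ω - ρ) 0 + 1) * α := by
    simpa only [← hZrec, hEB] using condExp_sq_min_add_le hF_le hσ0
      ((hZ_F.sub_const ρ).max measurable_const)
      (fun ω => ⟨le_max_right _ _, max_le (by linarith [(hZ_Icc ω).2]) hσ0⟩) (hmeas _) (hB t) hind
  filter_upwards [hstep] with ω hω _
  exact hω.trans (sq_max_sub_add_mul_le hα0.le hαρ hρ1 _)
end

section
/- Let V_1, ..., V_n be real-valued random variables (with arbitrary joint distribution), each taking finitely many nonnegative values, and let p_{iv} = Pr[V_i = v] for each i and each value v. Then E[max_i V_i] ≤ max { Σ_i Σ_v v · x_{iv} : 0 ≤ x_{iv} ≤ p_{iv} for all i, v, and Σ_i Σ_v x_{iv} ≤ 1 }, where the maximum is over all real vectors (x_{iv}) indexed by pairs (i, v) with v in the (finite) union of the supports. -/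
open Finset MeasureTheory Function

/-!
Let `D i` be the event that `i` is the smallest index at which `max_j V j` is attained; these
events partition `Ω`, and on `D i` the maximum equals `V i`. Hence
`x i v = Pr[D i ∧ V i = v]` is a feasible point of the linear program (`x i v ≤ Pr[V i = v]`,
and the `x i v` sum to `Pr[Ω] = 1`) whose objective value is exactly `E[max_i V i]`. Since all
values are nonnegative the objective is bounded on the feasible region, so the supremum
dominates this value.
-/

theorem measurableSet_disjointed {α ι : Type*} [MeasurableSpace α] [Preorder ι]
    [LocallyFiniteOrderBot ι] {f : ι → Set α} (h : ∀ i, MeasurableSet (f i)) (i : ι) :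
    MeasurableSet (disjointed f i) :=
  disjointedRec (fun _ _ ht => ht.diff (h _)) (h i)

theorem integral_eq_sum_setIntegral_of_iUnion_eq_univ {Ω ι : Type*} [MeasurableSpace Ω]
    [Fintype ι] {μ : Measure Ω} {f : Ω → ℝ} {D : ι → Set Ω} (hD : ∀ i, MeasurableSet (D i))
    (hdisj : Pairwise (Disjoint on D)) (hcover : ⋃ i, D i = Set.univ) (hf : Integrable f μ) :
    ∫ ω, f ω ∂μ = ∑ i, ∫ ω in D i, f ω ∂μ := by
  rw [← setIntegral_univ, ← hcover, integral_iUnion_fintype hD hdisj fun _ => hf.integrableOn]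

theorem MeasureTheory.Integrable.finset_sup' {Ω ι : Type*} [MeasurableSpace Ω] {μ : Measure Ω}
    {s : Finset ι} (hne : s.Nonempty) {f : ι → Ω → ℝ} (hf : ∀ i ∈ s, Integrable (f i) μ) :
    Integrable (fun ω => s.sup' hne fun i => f i ω) μ := by
  simpa only [← Finset.sup'_apply] using
    Finset.sup'_induction (p := fun g => Integrable g μ) hne f (fun _ hg _ hh => hg.sup hh) hf

section FirstMaximizer

variable {Ω ι : Type*} [LinearOrder ι] [LocallyFiniteOrderBot ι]

def firstMaximizerSet (f : ι → Ω → ℝ) : ι → Set Ω :=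
  disjointed fun i => {ω | ∀ j, f j ω ≤ f i ω}

theorem pairwise_disjoint_firstMaximizerSet (f : ι → Ω → ℝ) :
    Pairwise (Disjoint on firstMaximizerSet f) :=
  disjoint_disjointed _

variable [Fintype ι]

theorem iUnion_firstMaximizerSet [Nonempty ι] (f : ι → Ω → ℝ) :
    ⋃ i, firstMaximizerSet f i = Set.univ := by
  refine iUnion_disjointed.trans (Set.eq_univ_of_forall fun ω => Set.mem_iUnion.2 ?_)
  obtain ⟨i, -, hi⟩ := Finset.exists_max_image univ (fun j => f j ω) univ_nonempty
  exact ⟨i, fun j => hi j (mem_univ j)⟩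

theorem sup'_eq_of_mem_firstMaximizerSet (f : ι → Ω → ℝ) (hne : (univ : Finset ι).Nonempty)
    {i : ι} {ω : Ω} (hω : ω ∈ firstMaximizerSet f i) :
    univ.sup' hne (fun j => f j ω) = f i ω :=
  le_antisymm (Finset.sup'_le _ _ fun j _ => disjointed_subset _ i hω j)
    (Finset.le_sup' (fun j => f j ω) (mem_univ i))

variable [MeasurableSpace Ω]

theorem measurableSet_firstMaximizerSet {f : ι → Ω → ℝ} (hf : ∀ i, Measurable (f i)) (i : ι) :
    MeasurableSet (firstMaximizerSet f i) :=
  measurableSet_disjointed (fun i => by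
    simpa only [Set.ofPred_forall] using
      MeasurableSet.iInter fun j => measurableSet_le (hf j) (hf i)) i

theorem integral_sup'_eq_sum_setIntegral_firstMaximizerSet {μ : Measure Ω}
    (hne : (univ : Finset ι).Nonempty) {f : ι → Ω → ℝ} (hf : ∀ i, Measurable (f i))
    (hint : ∀ i, Integrable (f i) μ) :
    ∫ ω, univ.sup' hne (fun i => f i ω) ∂μ = ∑ i, ∫ ω in firstMaximizerSet f i, f i ω ∂μ := by
  have : Nonempty ι := hne.to_subtype.map Subtype.val
  rw [integral_eq_sum_setIntegral_of_iUnion_eq_univ (measurableSet_firstMaximizerSet hf)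
    (pairwise_disjoint_firstMaximizerSet f) (iUnion_firstMaximizerSet f)
    (Integrable.finset_sup' hne fun i _ => hint i)]
  exact Finset.sum_congr rfl fun i _ =>
    setIntegral_congr_fun (measurableSet_firstMaximizerSet hf i) fun ω =>
      sup'_eq_of_mem_firstMaximizerSet f hne

end FirstMaximizer

theorem sum_indicator_preimage_singleton_eq {Ω : Type*} {g : Ω → ℝ} {S : Finset ℝ}
    (hS : ∀ ω, g ω ∈ S) (ω : Ω) :
    ∑ v ∈ S, (g ⁻¹' {v}).indicator (fun _ => v) ω = g ω := by
  rw [Finset.sum_eq_single_of_mem (g ω) (hS ω)]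
  · simp
  · exact fun v _ hv => Set.indicator_of_notMem (fun h => hv h.symm) _

section FiniteRange

variable {Ω : Type*} [MeasurableSpace Ω] (ν : Measure Ω) [IsFiniteMeasure ν] {g : Ω → ℝ}
  {S : Finset ℝ}

theorem sum_measureReal_preimage_singleton_eq_univ (hg : Measurable g) (hS : ∀ ω, g ω ∈ S) :
    ∑ v ∈ S, ν.real (g ⁻¹' {v}) = ν.real Set.univ := by
  rw [sum_measureReal_preimage_singleton S fun v _ => hg (measurableSet_singleton v)]
  congr 1
  exact Set.eq_univ_of_forall hS

theorem integrable_of_forall_mem_finset (hg : Measurable g) (hS : ∀ ω, g ω ∈ S) :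
    Integrable g ν := by
  rw [← funext (sum_indicator_preimage_singleton_eq hS)]
  exact integrable_finsetSum _ fun v _ =>
    (integrable_const v).indicator (hg (measurableSet_singleton v))

theorem integral_eq_sum_mul_measureReal_preimage (hg : Measurable g) (hS : ∀ ω, g ω ∈ S) :
    ∫ ω, g ω ∂ν = ∑ v ∈ S, v * ν.real (g ⁻¹' {v}) := by
  have hfib : ∀ v, MeasurableSet (g ⁻¹' {v}) := fun v => hg (measurableSet_singleton v)
  simp_rw [← sum_indicator_preimage_singleton_eq hS]
  rw [integral_finsetSum _ fun v _ => (integrable_const v).indicator (hfib v)]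
  refine Finset.sum_congr rfl fun v _ => ?_
  rw [integral_indicator_const v (hfib v), smul_eq_mul, mul_comm]

end FiniteRange

theorem bddAbove_lpValues {ι : Type*} [Fintype ι] {S : Finset ℝ} (hS : ∀ v ∈ S, 0 ≤ v)
    (p : ι → ℝ → ℝ) :
    BddAbove {z : ℝ | ∃ x : ι → ℝ → ℝ,
        (∀ i, ∀ v ∈ S, 0 ≤ x i v ∧ x i v ≤ p i v) ∧
        (∑ i, ∑ v ∈ S, x i v) ≤ 1 ∧
        z = ∑ i, ∑ v ∈ S, v * x i v} := by
  refine ⟨∑ i, ∑ v ∈ S, v * p i v, ?_⟩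
  rintro z ⟨x, hx, -, rfl⟩
  gcongr with i _ v hv
  · exact hS v hv
  · exact (hx i v hv).2

/-- `LPMAX` bound: for arbitrary (jointly distributed) random variables
`V 1, ..., V n`, each with finite nonnegative support, with `p i v = Pr[V i = v]`
and `S` the union of the supports,
`E[max_i V i] ≤ max { ∑_i ∑_{v ∈ S} v * x i v : 0 ≤ x i v ≤ p i v, ∑_i ∑_v x i v ≤ 1 }`. -/
theorem stmt10 {Ω : Type*} [MeasurableSpace Ω] (μ : Measure Ω) [IsProbabilityMeasure μ]
    (n : ℕ) (hn : 0 < n) (V : Fin n → Ω → ℝ)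
    (hmeas : ∀ i, Measurable (V i))
    (hfin : ∀ i, (Set.range (V i)).Finite)
    (hnonneg : ∀ i ω, 0 ≤ V i ω)
    (p : Fin n → ℝ → ℝ)
    (hp : ∀ i v, p i v = (μ {ω | V i ω = v}).toReal)
    (S : Finset ℝ)
    (hS : S = Finset.univ.biUnion fun i => (hfin i).toFinset) :
    (∫ ω, Finset.univ.sup' ⟨⟨0, hn⟩, Finset.mem_univ _⟩ (fun i => V i ω) ∂μ) ≤
      sSup {z : ℝ | ∃ x : Fin n → ℝ → ℝ,
        (∀ i, ∀ v ∈ S, 0 ≤ x i v ∧ x i v ≤ p i v) ∧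
        (∑ i, ∑ v ∈ S, x i v) ≤ 1 ∧
        z = ∑ i, ∑ v ∈ S, v * x i v} := by
  have hVS : ∀ i ω, V i ω ∈ S := fun i ω => by
    rw [hS]
    exact Finset.mem_biUnion.2 ⟨i, Finset.mem_univ _, (hfin i).mem_toFinset.2 ⟨ω, rfl⟩⟩
  have hS_nonneg : ∀ v ∈ S, 0 ≤ v := fun v hv => by
    obtain ⟨i, -, hi⟩ := Finset.mem_biUnion.1 (hS ▸ hv)
    obtain ⟨ω, rfl⟩ := (hfin i).mem_toFinset.1 hi
    exact hnonneg i ω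
  set D := firstMaximizerSet V
  have hD := measurableSet_firstMaximizerSet hmeas
  set x : Fin n → ℝ → ℝ := fun i v => (μ.restrict (D i)).real (V i ⁻¹' {v})
  have hvalue : ∫ ω, univ.sup' ⟨⟨0, hn⟩, mem_univ _⟩ (fun i => V i ω) ∂μ
      = ∑ i, ∑ v ∈ S, v * x i v := by
    refine (integral_sup'_eq_sum_setIntegral_firstMaximizerSet _ hmeas
      fun i => integrable_of_forall_mem_finset μ (hmeas i) (hVS i)).trans ?_
    exact Finset.sum_congr rfl fun i _ =>
      integral_eq_sum_mul_measureReal_preimage _ (hmeas i) (hVS i)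
  have hx_le : ∀ i, ∀ v ∈ S, 0 ≤ x i v ∧ x i v ≤ p i v := fun i v _ =>
    ⟨measureReal_nonneg, by
      show (μ.restrict (D i)).real _ ≤ _
      rw [hp, measureReal_restrict_apply (hmeas i (measurableSet_singleton v))]
      exact measureReal_mono Set.inter_subset_left⟩
  have hx_sum : ∑ i, ∑ v ∈ S, x i v = 1 := by
    have : Nonempty (Fin n) := ⟨⟨0, hn⟩⟩
    simp_rw [x, sum_measureReal_preimage_singleton_eq_univ _ (hmeas _) (hVS _),
      measureReal_restrict_apply_univ]
    rw [← measureReal_iUnion_fintype (μ := μ) (pairwise_disjoint_firstMaximizerSet V) hD,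
      iUnion_firstMaximizerSet, probReal_univ]
  exact hvalue ▸ le_csSup (bddAbove_lpValues hS_nonneg p) ⟨x, hx_le, hx_sum.le, rfl⟩
end

section
/- Fix integers M ≥ 1 and n ≥ 1, reals ϱ_1 ≥ ϱ_2 ≥ ... ≥ ϱ_M > 0, a finite set U_B of nonnegative bid values, nonnegative reals p_{iv} for i ∈ {1,...,n} and v ∈ U_B, and nonnegative reals λ_1, ..., λ_n. Consider the linear program: minimize Σ_{i=1}^n ζ_i + Σ_{ℓ=1}^M τ_ℓ over nonnegative variables τ_ℓ, ξ_{iv}, ζ_i subject to τ_ℓ + ξ_{iv} ≥ v·ϱ_ℓ for all i, v, ℓ, and ζ_i − Σ_v ξ_{iv}·p_{iv} ≥ −λ_i for all i. Then for any optimal solution (τ*, ξ*, ζ*): (i) for every ℓ with τ*_ℓ > 0 there exist an index i and a value v ∈ U_B with v ≥ τ*_ℓ/ϱ_ℓ such that ξ*_{iv} = v·ϱ_ℓ − τ*_ℓ; and (ii) the sequence τ*_ℓ/ϱ_ℓ is nonincreasing in ℓ. -/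
/-!
If no constraint `τ ℓ + ξ i v ≥ v * ϱ ℓ` of a slot `ℓ` with `τ ℓ > 0` were tight, `τ ℓ` could be
lowered a little without leaving the feasible region, contradicting optimality; a tight constraint
with `ξ i v ≥ 0` forces `τ ℓ / ϱ ℓ ≤ v`. For slots `a ≤ b`, the constraint of slot `a` for the value
`v` that is tight at slot `b` reads `ϱ a (v - τ a / ϱ a) ≤ ϱ b (v - τ b / ϱ b)`, and `ϱ b ≤ ϱ a`
then yields `τ b / ϱ b ≤ τ a / ϱ a`.
-/

open Finset

theorem Finset.exists_between_of_forall_lt {α β : Type*} [LinearOrder β] (s : Finset α)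
    (f : α → β) {a b : β} (hab : a < b) (hf : ∀ x ∈ s, f x < b) :
    ∃ t, a ≤ t ∧ t < b ∧ ∀ x ∈ s, f x ≤ t := by
  classical
  induction s using Finset.induction_on with
  | empty => exact ⟨a, le_rfl, hab, by simp⟩
  | insert x s _ ih =>
    obtain ⟨t, hat, htb, hst⟩ := ih fun y hy => hf y (mem_insert_of_mem hy)
    refine ⟨max t (f x), le_max_of_le_left hat, max_lt htb (hf x (mem_insert_self x s)), ?_⟩
    simp only [mem_insert, forall_eq_or_imp]
    exact ⟨le_max_right _ _, fun y hy => le_max_of_le_left (hst y hy)⟩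

theorem div_le_div_of_tight {ϱa ϱb τa τb v : ℝ} (hb : 0 < ϱb) (hba : ϱb ≤ ϱa)
    (hv : τb / ϱb ≤ v) (h : v * ϱa ≤ τa + (v * ϱb - τb)) : τb / ϱb ≤ τa / ϱa := by
  have ha : 0 < ϱa := hb.trans_le hba
  have hτb : τb = τb / ϱb * ϱb := (div_mul_cancel₀ τb hb.ne').symm
  have hgap : ϱb * (v - τb / ϱb) ≤ ϱa * (v - τb / ϱb) :=
    mul_le_mul_of_nonneg_right hba (sub_nonneg.2 hv)
  rw [le_div_iff₀ ha]
  nlinarith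

section SlotDual

variable {ι κ : Type*}

def SlotDualFeasible (ϱ : ι → ℝ) (UB : Finset ℝ) (p : κ → ℝ → ℝ) (lam : κ → ℝ)
    (τ : ι → ℝ) (ξ : κ → ℝ → ℝ) (ζ : κ → ℝ) : Prop :=
  (∀ ℓ, 0 ≤ τ ℓ) ∧ (∀ i, ∀ v ∈ UB, 0 ≤ ξ i v) ∧ (∀ i, 0 ≤ ζ i) ∧
    (∀ i ℓ, ∀ v ∈ UB, v * ϱ ℓ ≤ τ ℓ + ξ i v) ∧
    (∀ i, -lam i ≤ ζ i - ∑ v ∈ UB, ξ i v * p i v)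

variable {ϱ : ι → ℝ} {UB : Finset ℝ} {p : κ → ℝ → ℝ} {lam : κ → ℝ}
  {τ : ι → ℝ} {ξ : κ → ℝ → ℝ} {ζ : κ → ℝ}

theorem SlotDualFeasible.update_tau [DecidableEq ι] (h : SlotDualFeasible ϱ UB p lam τ ξ ζ)
    {ℓ : ι} {t : ℝ} (ht : 0 ≤ t) (hcov : ∀ i, ∀ v ∈ UB, v * ϱ ℓ ≤ t + ξ i v) :
    SlotDualFeasible ϱ UB p lam (Function.update τ ℓ t) ξ ζ := by
  obtain ⟨hτ, hξ, hζ, hcon, hlam⟩ := h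
  refine ⟨fun k => ?_, hξ, hζ, fun i k v hv => ?_, hlam⟩ <;>
    rcases eq_or_ne k ℓ with rfl | hk
  · simpa using ht
  · simpa [hk] using hτ k
  · simpa using hcov i v hv
  · simpa [hk] using hcon i k v hv

theorem SlotDualFeasible.exists_tight [Fintype ι] [DecidableEq ι] [Fintype κ]
    (h : SlotDualFeasible ϱ UB p lam τ ξ ζ)
    (hmin : ∀ τ', SlotDualFeasible ϱ UB p lam τ' ξ ζ → ∑ ℓ, τ ℓ ≤ ∑ ℓ, τ' ℓ)
    {ℓ : ι} (hℓ : 0 < τ ℓ) : ∃ i, ∃ v ∈ UB, ξ i v = v * ϱ ℓ - τ ℓ := by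
  by_contra! hslack
  have hlt : ∀ q ∈ (univ : Finset κ) ×ˢ UB, q.2 * ϱ ℓ - ξ q.1 q.2 < τ ℓ := by
    rintro ⟨i, v⟩ hq
    have hv : v ∈ UB := (mem_product.1 hq).2
    have hne : ξ i v ≠ v * ϱ ℓ - τ ℓ := hslack i v hv
    have hle : v * ϱ ℓ ≤ τ ℓ + ξ i v := h.2.2.2.1 i ℓ v hv
    contrapose! hne
    linarith
  obtain ⟨t, ht0, htτ, hcov⟩ := (univ ×ˢ UB).exists_between_of_forall_lt _ hℓ hlt
  have hlowered := h.update_tau ht0 fun i v hv => by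
    linarith [hcov (i, v) (mem_product.2 ⟨mem_univ i, hv⟩)]
  have hdec : ∑ k, Function.update τ ℓ t k < ∑ k, τ k := by
    refine sum_lt_sum (fun k _ => ?_) ⟨ℓ, mem_univ ℓ, by simpa using htτ⟩
    rcases eq_or_ne k ℓ with rfl | hk
    · simpa using htτ.le
    · simp [hk]
  exact (hmin _ hlowered).not_gt hdec

end SlotDual

theorem stmt11_general (M n : ℕ)
    (ϱ : Fin M → ℝ) (hϱpos : ∀ ℓ, 0 < ϱ ℓ) (hϱanti : Antitone ϱ)
    (UB : Finset ℝ)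
    (p : Fin n → ℝ → ℝ)
    (lam : Fin n → ℝ)
    (τ : Fin M → ℝ) (ξ : Fin n → ℝ → ℝ) (ζ : Fin n → ℝ)
    (hfeas : (∀ ℓ, 0 ≤ τ ℓ) ∧ (∀ i, ∀ v ∈ UB, 0 ≤ ξ i v) ∧ (∀ i, 0 ≤ ζ i) ∧
      (∀ i ℓ, ∀ v ∈ UB, v * ϱ ℓ ≤ τ ℓ + ξ i v) ∧
      (∀ i, -lam i ≤ ζ i - ∑ v ∈ UB, ξ i v * p i v))
    (hopt : ∀ (τ' : Fin M → ℝ) (ξ' : Fin n → ℝ → ℝ) (ζ' : Fin n → ℝ),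
      ((∀ ℓ, 0 ≤ τ' ℓ) ∧ (∀ i, ∀ v ∈ UB, 0 ≤ ξ' i v) ∧ (∀ i, 0 ≤ ζ' i) ∧
        (∀ i ℓ, ∀ v ∈ UB, v * ϱ ℓ ≤ τ' ℓ + ξ' i v) ∧
        (∀ i, -lam i ≤ ζ' i - ∑ v ∈ UB, ξ' i v * p i v)) →
      (∑ i, ζ i) + (∑ ℓ, τ ℓ) ≤ (∑ i, ζ' i) + (∑ ℓ, τ' ℓ)) :
    (∀ ℓ, 0 < τ ℓ → ∃ i : Fin n, ∃ v ∈ UB,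
      τ ℓ / ϱ ℓ ≤ v ∧ ξ i v = v * ϱ ℓ - τ ℓ) ∧
    Antitone (fun ℓ => τ ℓ / ϱ ℓ) := by
  have hdual : SlotDualFeasible ϱ UB p lam τ ξ ζ := hfeas
  have hmin : ∀ τ', SlotDualFeasible ϱ UB p lam τ' ξ ζ → ∑ ℓ, τ ℓ ≤ ∑ ℓ, τ' ℓ :=
    fun τ' h' => by linarith [hopt τ' ξ ζ h']
  have tight : ∀ ℓ, 0 < τ ℓ → ∃ i : Fin n, ∃ v ∈ UB,
      τ ℓ / ϱ ℓ ≤ v ∧ ξ i v = v * ϱ ℓ - τ ℓ := by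
    intro ℓ hℓ
    obtain ⟨i, v, hv, hξv⟩ := hdual.exists_tight hmin hℓ
    exact ⟨i, v, hv, (div_le_iff₀ (hϱpos ℓ)).2 (by linarith [hfeas.2.1 i v hv]), hξv⟩
  refine ⟨tight, fun a b hab => ?_⟩
  rcases (hfeas.1 b).eq_or_lt with hb | hb
  · simpa [← hb] using div_nonneg (hfeas.1 a) (hϱpos a).le
  · obtain ⟨i, v, hv, hvb, hξv⟩ := tight b hb
    exact div_le_div_of_tight (hϱpos b) (hϱanti hab) hvb (hξv ▸ hfeas.2.2.2.1 i a v hv)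

/-- Structure of the optimal dual solution of the per-impression slot LP.
For slot discount rates `ϱ 1 ≥ ... ≥ ϱ M > 0`, bid values `UB`, bid probabilities
`p i v ≥ 0` and multipliers `lam i ≥ 0`, consider the dual LP
`min ∑ i ζ i + ∑ ℓ τ ℓ` subject to `τ ℓ + ξ i v ≥ v * ϱ ℓ`,
`ζ i - ∑_v ξ i v * p i v ≥ -lam i` and nonnegativity.  For any optimal solution
`(τ, ξ, ζ)`: (i) for every `ℓ` with `τ ℓ > 0` there are `i` and `v ∈ UB` with
`v ≥ τ ℓ / ϱ ℓ` and `ξ i v = v * ϱ ℓ - τ ℓ`; (ii) `τ ℓ / ϱ ℓ` is nonincreasing. -/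
theorem stmt11 (M n : ℕ) (hM : 1 ≤ M) (hn : 1 ≤ n)
    (ϱ : Fin M → ℝ) (hϱpos : ∀ ℓ, 0 < ϱ ℓ) (hϱanti : Antitone ϱ)
    (UB : Finset ℝ) (hUB : ∀ v ∈ UB, 0 ≤ v)
    (p : Fin n → ℝ → ℝ) (hp : ∀ i, ∀ v ∈ UB, 0 ≤ p i v)
    (lam : Fin n → ℝ) (hlam : ∀ i, 0 ≤ lam i)
    (τ : Fin M → ℝ) (ξ : Fin n → ℝ → ℝ) (ζ : Fin n → ℝ)
    (hfeas : (∀ ℓ, 0 ≤ τ ℓ) ∧ (∀ i, ∀ v ∈ UB, 0 ≤ ξ i v) ∧ (∀ i, 0 ≤ ζ i) ∧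
      (∀ i ℓ, ∀ v ∈ UB, v * ϱ ℓ ≤ τ ℓ + ξ i v) ∧
      (∀ i, -lam i ≤ ζ i - ∑ v ∈ UB, ξ i v * p i v))
    (hopt : ∀ (τ' : Fin M → ℝ) (ξ' : Fin n → ℝ → ℝ) (ζ' : Fin n → ℝ),
      ((∀ ℓ, 0 ≤ τ' ℓ) ∧ (∀ i, ∀ v ∈ UB, 0 ≤ ξ' i v) ∧ (∀ i, 0 ≤ ζ' i) ∧
        (∀ i ℓ, ∀ v ∈ UB, v * ϱ ℓ ≤ τ' ℓ + ξ' i v) ∧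
        (∀ i, -lam i ≤ ζ' i - ∑ v ∈ UB, ξ' i v * p i v)) →
      (∑ i, ζ i) + (∑ ℓ, τ ℓ) ≤ (∑ i, ζ' i) + (∑ ℓ, τ' ℓ)) :
    (∀ ℓ, 0 < τ ℓ → ∃ i : Fin n, ∃ v ∈ UB,
      τ ℓ / ϱ ℓ ≤ v ∧ ξ i v = v * ϱ ℓ - τ ℓ) ∧
    Antitone (fun ℓ => τ ℓ / ϱ ℓ) :=
  stmt11_general M n ϱ hϱpos hϱanti UB p lam τ ξ ζ hfeas hopt
end
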